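/- arXiv:1409.6880 — 3 statements merged into one kernel-verified Lean document; each statement's English description precedes it below -/
import Mathlib

section
/- Let U be a real m×n matrix and let q be a natural number with rank(U) ≤ q. Then there exist a real symmetric m×m matrix V and a real symmetric n×n matrix W such that rank(V) + rank(W) ≤ 2q and the (m+n)×(m+n) block matrix [[V, U], [Uᵀ, W]] is positive semidefinite. -/
/-!
Factor `U = A * B` through `Fin (rank U)`. Then `[[A Aᵀ, U], [Uᵀ, Bᵀ B]]` is the Gram matrix
`[A; Bᵀ] [A; Bᵀ]ᵀ`, hence positive semidefinite, and both diagonal blocks have rank at most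
`rank U ≤ q`.
-/

open Matrix

theorem Matrix.exists_eq_mul_fin_rank {K : Type*} [Field K] {m n : Type*} [Fintype m]
    [Fintype n] (U : Matrix m n K) :
    ∃ (A : Matrix m (Fin U.rank) K) (B : Matrix (Fin U.rank) n K), U = A * B := by
  classical
  let b := Module.finBasisOfFinrankEq K (LinearMap.range U.mulVecLin) (n := U.rank) rfl
  refine ⟨LinearMap.toMatrix b (Pi.basisFun K m) (LinearMap.range U.mulVecLin).subtype,
    LinearMap.toMatrix (Pi.basisFun K n) b U.mulVecLin.rangeRestrict, ?_⟩
  rw [← LinearMap.toMatrix_comp, LinearMap.subtype_comp_codRestrict]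
  exact (LinearMap.toMatrix_toLin (Pi.basisFun K n) (Pi.basisFun K m) U).symm

theorem Matrix.posSemidef_fromBlocks_mul {R : Type*} [CommRing R] [PartialOrder R] [StarRing R]
    [StarOrderedRing R] {m n k : Type*} [Fintype m] [Fintype n] [Fintype k]
    (A : Matrix m k R) (B : Matrix k n R) :
    (fromBlocks (A * Aᴴ) (A * B) (A * B)ᴴ (Bᴴ * B)).PosSemidef := by
  convert posSemidef_self_mul_conjTranspose (fromRows A Bᴴ) using 1
  rw [conjTranspose_fromRows_eq_fromCols_conjTranspose, fromRows_mul_fromCols,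
    conjTranspose_conjTranspose, conjTranspose_mul]

/-- If `U` is a real `m × n` matrix with `rank U ≤ q`, then there exist real symmetric
matrices `V` (`m × m`) and `W` (`n × n`) with `rank V + rank W ≤ 2q` such that the
block matrix `[[V, U], [Uᵀ, W]]` is positive semidefinite. -/
theorem exists_symm_blocks_of_rank_le
    (m n q : ℕ) (U : Matrix (Fin m) (Fin n) ℝ) (hU : U.rank ≤ q) :
    ∃ (V : Matrix (Fin m) (Fin m) ℝ) (W : Matrix (Fin n) (Fin n) ℝ),
      V.IsSymm ∧ W.IsSymm ∧ V.rank + W.rank ≤ 2 * q ∧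
      (Matrix.fromBlocks V U Uᵀ W).PosSemidef := by
  obtain ⟨A, B, hAB⟩ := U.exists_eq_mul_fin_rank
  have hV : (A * Aᵀ).rank ≤ q := (rank_mul_le_left A Aᵀ).trans (A.rank_le_width.trans hU)
  have hW : (Bᵀ * B).rank ≤ q := (rank_mul_le_right Bᵀ B).trans (B.rank_le_height.trans hU)
  refine ⟨A * Aᵀ, Bᵀ * B, transpose_mul _ _, transpose_mul _ _, by omega, ?_⟩
  simpa [hAB, conjTranspose_eq_transpose_of_trivial] using A.posSemidef_fromBlocks_mul B
end

section
/- Let V be a real symmetric m×m matrix, W a real symmetric n×n matrix, U a real m×n matrix, and q a natural number. If the (m+n)×(m+n) block matrix [[V, U], [Uᵀ, W]] is positive semidefinite and rank(V) + rank(W) ≤ 2q, then rank(U) ≤ q. -/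
/-!
If `V x = 0`, then `(x, 0)` is isotropic for the positive semidefinite block matrix, hence lies in
its kernel, which forces `Uᵀ x = 0`. Thus `ker V ≤ ker Uᵀ` and likewise `ker W ≤ ker U`, so by
rank–nullity `rank U` is at most both `rank V` and `rank W`, hence at most their average `q`.
-/

open Matrix

namespace Matrix

theorem rank_le_rank_of_mulVec_eq_zero {m m' n K : Type*} [Fintype n] [Field K]
    (A : Matrix m n K) (B : Matrix m' n K) (h : ∀ x, A *ᵥ x = 0 → B *ᵥ x = 0) :
    B.rank ≤ A.rank := by
  have hker : LinearMap.ker A.mulVecLin ≤ LinearMap.ker B.mulVecLin := h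
  have hA := A.mulVecLin.finrank_range_add_finrank_ker
  have hB := B.mulVecLin.finrank_range_add_finrank_ker
  have := Submodule.finrank_mono hker
  rw [rank, rank]
  omega

open scoped ComplexOrder

variable {m n 𝕜 : Type*} [Fintype m] [Fintype n] [RCLike 𝕜]
  {A : Matrix m m 𝕜} {B : Matrix m n 𝕜} {D : Matrix n n 𝕜}

theorem PosSemidef.conjTranspose_mulVec_eq_zero_of_fromBlocks
    (hM : (fromBlocks A B Bᴴ D).PosSemidef) {x : m → 𝕜} (hx : A *ᵥ x = 0) : Bᴴ *ᵥ x = 0 := by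
  have hMx : fromBlocks A B Bᴴ D *ᵥ Sum.elim x 0 = Sum.elim (0 : m → 𝕜) (Bᴴ *ᵥ x) := by
    simp [fromBlocks_mulVec, hx]
  have hiso : star (Sum.elim x 0) ⬝ᵥ fromBlocks A B Bᴴ D *ᵥ Sum.elim x 0 = 0 := by
    simp [hMx, dotProduct, Fintype.sum_sum_type]
  rw [hM.dotProduct_mulVec_zero_iff, hMx] at hiso
  exact congrArg (· ∘ Sum.inr) hiso

theorem PosSemidef.mulVec_eq_zero_of_fromBlocks
    (hM : (fromBlocks A B Bᴴ D).PosSemidef) {y : n → 𝕜} (hy : D *ᵥ y = 0) : B *ᵥ y = 0 := by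
  have hswap : (fromBlocks D Bᴴ Bᴴᴴ A).PosSemidef := by
    simpa using hM.submatrix Sum.swap
  simpa using hswap.conjTranspose_mulVec_eq_zero_of_fromBlocks hy

end Matrix

theorem rank_offdiag_le_of_block_psd_general
    (m n q : ℕ)
    (V : Matrix (Fin m) (Fin m) ℝ)
    (W : Matrix (Fin n) (Fin n) ℝ)
    (U : Matrix (Fin m) (Fin n) ℝ)
    (hblock : (Matrix.fromBlocks V U Uᵀ W).PosSemidef)
    (hrank : V.rank + W.rank ≤ 2 * q) :
    U.rank ≤ q := by
  rw [← conjTranspose_eq_transpose_of_trivial] at hblock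
  have hUV : Uᴴ.rank ≤ V.rank := rank_le_rank_of_mulVec_eq_zero V Uᴴ fun _ =>
    hblock.conjTranspose_mulVec_eq_zero_of_fromBlocks
  have hUW : U.rank ≤ W.rank := rank_le_rank_of_mulVec_eq_zero W U fun _ =>
    hblock.mulVec_eq_zero_of_fromBlocks
  rw [rank_conjTranspose] at hUV
  omega

/-- If the block matrix `[[V, U], [Uᵀ, W]]` with real symmetric diagonal blocks `V`, `W`
is positive semidefinite and `rank V + rank W ≤ 2q`, then `rank U ≤ q`. -/
theorem rank_offdiag_le_of_block_psd
    (m n q : ℕ)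
    (V : Matrix (Fin m) (Fin m) ℝ) (hV : V.IsSymm)
    (W : Matrix (Fin n) (Fin n) ℝ) (hW : W.IsSymm)
    (U : Matrix (Fin m) (Fin n) ℝ)
    (hblock : (Matrix.fromBlocks V U Uᵀ W).PosSemidef)
    (hrank : V.rank + W.rank ≤ 2 * q) :
    U.rank ≤ q :=
  rank_offdiag_le_of_block_psd_general m n q V W U hblock hrank
end

section
/- Let A be a real symmetric positive definite 4×4 matrix, let Z be a real 4×4 matrix, let S be a real symmetric 4×4 matrix such that S - Zᵀ A Z is positive semidefinite, and let q be a natural number. If rank(S) + 4 ≤ 2q, then rank(Z) ≤ q. -/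
open Matrix

namespace Matrix

theorem rank_le_rank_of_ker_mulVecLin_le {K m m' n : Type*} [Field K] [Fintype n]
    {M : Matrix m n K} {N : Matrix m' n K}
    (h : LinearMap.ker N.mulVecLin ≤ LinearMap.ker M.mulVecLin) : M.rank ≤ N.rank := by
  have hM := LinearMap.finrank_range_add_finrank_ker M.mulVecLin
  have hN := LinearMap.finrank_range_add_finrank_ker N.mulVecLin
  have hker := Submodule.finrank_mono h
  unfold rank
  omega

/-- If `S ⪰ Zᴴ A Z` with `A ≻ 0`, then `S x = 0` forces `(Z x)ᴴ A (Z x) ≤ 0`, hence `Z x = 0`. -/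
theorem ker_mulVecLin_le_of_posSemidef_sub {R m n : Type*} [CommRing R] [PartialOrder R]
    [StarRing R] [IsOrderedAddMonoid R] [Fintype m] [Fintype n]
    {A : Matrix m m R} {Z : Matrix m n R} {S : Matrix n n R} (hA : A.PosDef)
    (hpsd : (S - Zᴴ * A * Z).PosSemidef) :
    LinearMap.ker S.mulVecLin ≤ LinearMap.ker Z.mulVecLin := by
  intro x hx
  rw [LinearMap.mem_ker, mulVecLin_apply] at hx ⊢
  by_contra hZx
  have hpos := hA.dotProduct_mulVec_pos hZx
  have hnonneg := hpsd.dotProduct_mulVec_nonneg x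
  rw [sub_mulVec, dotProduct_sub, hx, dotProduct_zero, zero_sub, neg_nonneg] at hnonneg
  simp only [star_mulVec, dotProduct_mulVec, vecMul_vecMul] at hpos hnonneg
  exact (hnonneg.trans_lt hpos).false

end Matrix

theorem rank_Z_le_of_dual_rank_general
    (A : Matrix (Fin 4) (Fin 4) ℝ) (hA : A.PosDef)
    (Z : Matrix (Fin 4) (Fin 4) ℝ)
    (S : Matrix (Fin 4) (Fin 4) ℝ)
    (hpsd : (S - Zᵀ * A * Z).PosSemidef)
    (q : ℕ) (hrank : S.rank + 4 ≤ 2 * q) :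
    Z.rank ≤ q := by
  rw [← conjTranspose_eq_transpose_of_trivial] at hpsd
  have hZS : Z.rank ≤ S.rank :=
    rank_le_rank_of_ker_mulVecLin_le (ker_mulVecLin_le_of_posSemidef_sub hA hpsd)
  have hZ : Z.rank ≤ 4 := by simpa using Z.rank_le_card_width
  -- `q < 4` gives `S.rank ≤ 2q - 4 < q`; otherwise `Z.rank ≤ 4 ≤ q`.
  omega

/-- For `4 × 4` real matrices: if `A` is symmetric positive definite, `S` is symmetric
with `S - Zᵀ A Z ⪰ 0`, and `rank S + 4 ≤ 2q`, then `rank Z ≤ q`. -/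
theorem rank_Z_le_of_dual_rank
    (A : Matrix (Fin 4) (Fin 4) ℝ) (hA : A.PosDef)
    (Z : Matrix (Fin 4) (Fin 4) ℝ)
    (S : Matrix (Fin 4) (Fin 4) ℝ) (hS : S.IsSymm)
    (hpsd : (S - Zᵀ * A * Z).PosSemidef)
    (q : ℕ) (hrank : S.rank + 4 ≤ 2 * q) :
    Z.rank ≤ q :=
  rank_Z_le_of_dual_rank_general A hA Z S hpsd q hrank
end
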